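/- arXiv:1312.6096 — 4 statements merged into one kernel-verified Lean document; each statement's English description precedes it below -/
import Mathlib

section
/- A structure S is convex if and only if there exist a monotonic structure S₁ and an antimonotonic structure S₂ such that S(I) = (S₁(I) ∧ S₂(I)) for all interpretations I. -/
open Classical in
theorem convex_iff_mono_and_anti {U : Type*} (S : Set U → Bool) :
    (∀ X Y Z : Set U, X ⊆ Y → Y ⊆ Z → S X = true → S Z = true → S Y = true) ↔
    ∃ S₁ S₂ : Set U → Bool,
      (∀ X Y : Set U, X ⊆ Y → S₁ X = true → S₁ Y = true) ∧
      (∀ Y Z : Set U, Y ⊆ Z → S₂ Z = true → S₂ Y = true) ∧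
      (∀ I : Set U, S I = (S₁ I && S₂ I)) := by
  constructor
  · intro hconv
    refine ⟨fun I => decide (∃ X, X ⊆ I ∧ S X = true),
            fun I => decide (∃ Z, I ⊆ Z ∧ S Z = true), ?_, ?_, ?_⟩
    · intro X Y hXY h
      rw [decide_eq_true_iff] at h ⊢
      obtain ⟨W, hW, hSW⟩ := h
      exact ⟨W, hW.trans hXY, hSW⟩
    · intro Y Z hYZ h
      rw [decide_eq_true_iff] at h ⊢
      obtain ⟨W, hW, hSW⟩ := h
      exact ⟨W, hYZ.trans hW, hSW⟩
    · intro I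
      by_cases h : S I = true
      · rw [h]
        simp only [Bool.true_eq, Bool.and_eq_true, decide_eq_true_iff]
        exact ⟨⟨I, subset_rfl, h⟩, ⟨I, subset_rfl, h⟩⟩
      · rw [Bool.not_eq_true] at h
        rw [h]
        symm
        rw [Bool.and_eq_false_iff]
        by_contra hc
        push_neg at hc
        obtain ⟨h1, h2⟩ := hc
        rw [Bool.ne_false_iff, decide_eq_true_iff] at h1 h2
        obtain ⟨X, hX, hSX⟩ := h1
        obtain ⟨Z, hZ, hSZ⟩ := h2
        have := hconv X I Z hX hZ hSX hSZ
        rw [h] at this; exact absurd this (by simp)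
  · rintro ⟨S₁, S₂, hm, ha, heq⟩ X Y Z hXY hYZ hSX hSZ
    rw [heq] at hSX hSZ ⊢
    rw [Bool.and_eq_true] at hSX hSZ ⊢
    exact ⟨hm X Y hXY hSX.1, ha Y Z hYZ hSZ.2⟩
end

section
/- Every PSP answer set of a program P is an FLP answer set of P: if M is the least fixpoint of K^P_M, then M is a model of the FLP reduct P^M = { r ∈ P : M ⊨ B(r) }, and no proper subset J ⊊ M is a model of P^M. -/
structure Rule (U : Type*) where
  head : U
  body : Set U → Bool

def condSat {U : Type*} (S : Set U → Bool) (I M : Set U) : Prop :=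
  ∀ J : Set U, I ⊆ J → J ⊆ M → S J = true

def Kop {U : Type*} (P : Finset (Rule U)) (M I : Set U) : Set U :=
  {a | ∃ r ∈ P, r.head = a ∧ condSat r.body I M}

/-- `I` is a model of the set of rules `Q`. -/
def isModel {U : Type*} (Q : Set (Rule U)) (I : Set U) : Prop :=
  ∀ r ∈ Q, r.body I = true → r.head ∈ I

/-- The FLP reduct of `P` with respect to `M`. -/
def reduct {U : Type*} (P : Finset (Rule U)) (M : Set U) : Set (Rule U) :=
  {r | r ∈ P ∧ r.body M = true}

theorem psp_implies_flp {U : Type*} (P : Finset (Rule U)) (M : Set U)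
    (hfix : Kop P M M = M) (hleast : ∀ X : Set U, Kop P M X = X → M ⊆ X) :
    isModel (reduct P M) M ∧ ∀ J : Set U, J ⊂ M → ¬ isModel (reduct P M) J := by
  constructor
  · intro r hr hbody
    have hmem : r.head ∈ Kop P M M := ⟨r, hr.1, rfl, fun J h1 h2 => by
      have hJM : J = M := subset_antisymm h2 h1
      rwa [hJM]⟩
    rwa [hfix] at hmem
  · intro J hJ hmod
    have mono : ∀ A B : Set U, A ⊆ B → Kop P M A ⊆ Kop P M B := by
      rintro A B hAB a ⟨r, hrP, hh, hc⟩
      exact ⟨r, hrP, hh, fun K h1 h2 => hc K (hAB.trans h1) h2⟩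
    have hJM : J ⊆ M := hJ.1
    have pre : Kop P M J ⊆ J := by
      rintro a ⟨r, hrP, hh, hc⟩
      have hbM : r.body M = true := hc M hJM (subset_refl M)
      have hbJ : r.body J = true := hc J (subset_refl J) hJM
      exact hh ▸ hmod r ⟨hrP, hbM⟩ hbJ
    set X := ⋂₀ {Y : Set U | Kop P M Y ⊆ Y ∧ Y ⊆ J} with hX
    have hXJ : X ⊆ J := Set.sInter_subset_of_mem ⟨pre, subset_refl J⟩
    have hKX : Kop P M X ⊆ X := by
      intro a ha
      apply Set.mem_sInter.mpr
      rintro Y ⟨hY1, hY2⟩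
      exact hY1 (mono X Y (Set.sInter_subset_of_mem ⟨hY1, hY2⟩) ha)
    have hXK : X ⊆ Kop P M X :=
      Set.sInter_subset_of_mem ⟨mono _ _ hKX, hKX.trans hXJ⟩
    have hfp : Kop P M X = X := subset_antisymm hKX hXK
    exact hJ.2 ((hleast X hfp).trans hXJ)
end

section
/- For programs all of whose body structures are convex, the FLP and PSP semantics coincide: M is an FLP answer set of P if and only if M is a PSP answer set of P. -/
lemma Kop_mono {U : Type*} (P : Finset (Rule U)) (M : Set U) {I I' : Set U}
    (h : I ⊆ I') : Kop P M I ⊆ Kop P M I' := by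
  rintro a ⟨r, hr, hh, hcs⟩
  exact ⟨r, hr, hh, fun J h1 h2 => hcs J (h.trans h1) h2⟩

theorem flp_eq_psp_on_convex {U : Type*} (P : Finset (Rule U))
    (hconv : ∀ r ∈ P, ∀ X Y Z : Set U, X ⊆ Y → Y ⊆ Z →
      r.body X = true → r.body Z = true → r.body Y = true)
    (M : Set U) :
    (isModel (reduct P M) M ∧ ∀ J : Set U, J ⊂ M → ¬ isModel (reduct P M) J) ↔
    (Kop P M M = M ∧ ∀ X : Set U, Kop P M X = X → M ⊆ X) := by
  constructor
  · rintro ⟨hmod, hmin⟩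
    constructor
    · ext a
      constructor
      · rintro ⟨r, hr, rfl, hcs⟩
        exact hmod r ⟨hr, hcs M le_rfl le_rfl⟩ (hcs M le_rfl le_rfl)
      · intro ha
        by_contra hna
        refine hmin (M \ {a}) (Set.sdiff_singleton_ssubset.mpr ha) ?_
        rintro r ⟨hrP, hbM⟩ hbJ
        have hhM : r.head ∈ M := hmod r ⟨hrP, hbM⟩ hbM
        refine ⟨hhM, fun h => hna ?_⟩
        exact ⟨r, hrP, h, fun J h1 h2 => by rw [Set.Subset.antisymm h2 h1]; exact hbM⟩
    · intro X hX
      have hYmod : isModel (reduct P M) (X ∩ M) := by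
        rintro r ⟨hrP, hbM⟩ hbY
        have hcs : condSat r.body (X ∩ M) M := fun J h1 h2 =>
          hconv r hrP (X ∩ M) J M h1 h2 hbY hbM
        have hX' : r.head ∈ Kop P M X :=
          ⟨r, hrP, rfl, fun J h1 h2 => hcs J (Set.inter_subset_left.trans h1) h2⟩
        rw [hX] at hX'
        exact ⟨hX', hmod r ⟨hrP, hbM⟩ hbM⟩
      have hYM : X ∩ M ⊆ M := Set.inter_subset_right
      rcases hYM.eq_or_ssubset with h | h
      · rw [← h]; exact Set.inter_subset_left
      · exact absurd hYmod (hmin _ h)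
  · rintro ⟨hfix, hleast⟩
    constructor
    · rintro r ⟨hrP, hbM⟩ _
      rw [← hfix]
      exact ⟨r, hrP, rfl, fun J h1 h2 => by rw [Set.Subset.antisymm h2 h1]; exact hbM⟩
    · intro J hJ hmodJ
      set X := ⋂₀ {Y : Set U | Kop P M Y ⊆ Y} with hXdef
      have hpre : Kop P M X ⊆ X := by
        intro a ha
        intro Y hY
        exact hY ((Kop_mono P M (Set.sInter_subset_of_mem hY)) ha)
      have hpost : X ⊆ Kop P M X :=
        Set.sInter_subset_of_mem (Kop_mono P M hpre)
      have hXJ : X ⊆ J := by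
        apply Set.sInter_subset_of_mem
        rintro a ⟨r, hrP, rfl, hcs⟩
        exact hmodJ r ⟨hrP, hcs M hJ.subset le_rfl⟩ (hcs J le_rfl hJ.subset)
      exact hJ.2 ((hleast X (Set.Subset.antisymm hpre hpost)).trans hXJ)
end

section
/- If M is an FLP answer set of a program P, then the least fixpoint K of the operator K^P_M satisfies K ⊆ M and K is a model of the reduct P^M; consequently, by minimality of M, K = M. -/
theorem flp_implies_lfp_eq {U : Type*} (P : Finset (Rule U))
    (hconv : ∀ r ∈ P, ∀ X Y Z : Set U, X ⊆ Y → Y ⊆ Z →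
      r.body X = true → r.body Z = true → r.body Y = true)
    (M : Set U)
    (hmodel : isModel (reduct P M) M)
    (hmin : ∀ J : Set U, J ⊂ M → ¬ isModel (reduct P M) J)
    (K : Set U)
    (hKfix : Kop P M K = K) (hKleast : ∀ X : Set U, Kop P M X = X → K ⊆ X) :
    K ⊆ M ∧ isModel (reduct P M) K ∧ K = M := by
  -- Kop is monotone in I
  have hmono : ∀ I I' : Set U, I ⊆ I' → Kop P M I ⊆ Kop P M I' := by
    intro I I' hII a ha
    obtain ⟨r, hrP, hh, hc⟩ := ha
    exact ⟨r, hrP, hh, fun J hIJ hJM => hc J (hII.trans hIJ) hJM⟩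
  -- M is a prefixpoint
  have hpreM : Kop P M M ⊆ M := by
    intro a ha
    obtain ⟨r, hrP, hh, hc⟩ := ha
    have hbM : r.body M = true := hc M (subset_refl M) (subset_refl M)
    have := hmodel r ⟨hrP, hbM⟩ hbM
    rwa [hh] at this
  -- Knaster-Tarski least fixpoint
  set L : Set U := ⋂₀ {X | Kop P M X ⊆ X} with hL
  have hLsub : ∀ X, Kop P M X ⊆ X → L ⊆ X := fun X hX =>
    Set.sInter_subset_of_mem hX
  have hpreL : Kop P M L ⊆ L := by
    intro a ha
    apply Set.mem_sInter.mpr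
    intro X hX
    exact hX (hmono L X (hLsub X hX) ha)
  have hfixL : Kop P M L = L := by
    apply Set.Subset.antisymm hpreL
    exact hLsub _ (hmono _ _ hpreL)
  have hKM : K ⊆ M := (hKleast L hfixL).trans (hLsub M hpreM)
  have hKmod : isModel (reduct P M) K := by
    intro r hr hbK
    obtain ⟨hrP, hbM⟩ := hr
    have hc : condSat r.body K M := fun J hKJ hJM =>
      hconv r hrP K J M hKJ hJM hbK hbM
    have : r.head ∈ Kop P M K := ⟨r, hrP, rfl, hc⟩
    rwa [hKfix] at this
  refine ⟨hKM, hKmod, ?_⟩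
  by_contra hne
  exact hmin K ⟨hKM, fun h => hne (hKM.antisymm h)⟩ hKmod
end
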